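/- Let Q̄ be an imprecise probability tree. Then E_meas(f | s) ≤ E_V(f | s) for every global variable f ∈ V̄ and every situation s ∈ 𝒳*, where E_meas is the global measure-theoretic upper expectation and E_V is the game-theoretic upper expectation associated with Q̄. -/

import Mathlib

open Filter MeasureTheory
open scoped Classical ENNReal NNReal

namespace UEP

variable {X : Type*}

/-- The string of the first `n` states of a path `ω`. -/
def pref (ω : ℕ → X) (n : ℕ) : List X := List.ofFn (fun i : Fin n => ω i)

/-- The cylinder event of a situation `s`. -/
def cyl (s : List X) : Set (ℕ → X) := {ω : ℕ → X | pref ω s.length = s}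

/-- `f` depends only on the first `n` states. -/
def NMeas (n : ℕ) (f : (ℕ → X) → EReal) : Prop :=
  ∀ ω₁ ω₂ : ℕ → X, pref ω₁ n = pref ω₂ n → f ω₁ = f ω₂

/-- `f` is bounded below (by a real constant). -/
def IsBddBelow (f : (ℕ → X) → EReal) : Prop := ∃ c : ℝ, ∀ ω, (c : EReal) ≤ f ω

/-- `f` is bounded above (by a real constant). -/
def IsBddAbove (f : (ℕ → X) → EReal) : Prop := ∃ c : ℝ, ∀ ω, f ω ≤ (c : EReal)

/-- `f` is real-valued and bounded. -/
def IsGambleVal (f : (ℕ → X) → EReal) : Prop :=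
  ∃ a b : ℝ, ∀ ω, (a : EReal) ≤ f ω ∧ f ω ≤ (b : EReal)

/-- `f` is an `n`-measurable gamble. -/
def IsNGamble (n : ℕ) (f : (ℕ → X) → EReal) : Prop := NMeas n f ∧ IsGambleVal f

/-- `f` is a finitary gamble. -/
def IsFinitaryGamble (f : (ℕ → X) → EReal) : Prop := (∃ n, NMeas n f) ∧ IsGambleVal f

/-- `f` is finitary. -/
def IsFinitary (f : (ℕ → X) → EReal) : Prop := ∃ n, NMeas n f

/-- pointwise convergence of a sequence of global variables. -/
def PtwLim (fs : ℕ → (ℕ → X) → EReal) (f : (ℕ → X) → EReal) : Prop :=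
  ∀ ω, Tendsto (fun n => fs n ω) atTop (nhds (f ω))

/-- the sequence is uniformly bounded below. -/
def UnifBddBelow (fs : ℕ → (ℕ → X) → EReal) : Prop :=
  ∃ c : ℝ, ∀ n ω, (c : EReal) ≤ fs n ω

/-- `f` belongs to `V̄_{b,lim}`: bounded below and a pointwise limit of finitary gambles. -/
def Vblim (f : (ℕ → X) → EReal) : Prop :=
  IsBddBelow f ∧ ∃ fs : ℕ → (ℕ → X) → EReal,
    (∀ n, IsFinitaryGamble (fs n)) ∧ PtwLim fs f

/-- A coherent upper expectation on the finite state space `X`. -/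
def IsCoherent [Fintype X] (Q : (X → ℝ) → ℝ) : Prop :=
  (∀ f : X → ℝ, Q f ≤ ⨆ x, f x) ∧
  (∀ f g : X → ℝ, Q (fun x => f x + g x) ≤ Q f + Q g) ∧
  (∀ l : ℝ, 0 ≤ l → ∀ f : X → ℝ, Q (fun x => l * f x) = l * Q f)

/-- Axiom P1: compatibility with the local models. -/
def P1 (Q : List X → (X → ℝ) → ℝ) (E : ((ℕ → X) → EReal) → List X → EReal) : Prop :=
  ∀ (s : List X) (f : X → ℝ),
    E (fun ω => (f (ω s.length) : EReal)) s = ((Q s f : ℝ) : EReal)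

/-- Axiom P2. -/
def P2 (E : ((ℕ → X) → EReal) → List X → EReal) : Prop :=
  ∀ f : (ℕ → X) → EReal, IsFinitaryGamble f → ∀ s : List X,
    E f s = E (fun ω => if ω ∈ cyl s then f ω else 0) s

/-- Axiom P3 (inequality form). -/
def P3le (E : ((ℕ → X) → EReal) → List X → EReal) : Prop :=
  ∀ f : (ℕ → X) → EReal, IsFinitaryGamble f → ∀ (n : ℕ) (ω : ℕ → X),
    E f (pref ω n) ≤ E (fun ω' => E f (pref ω' (n + 1))) (pref ω n)

/-- Axiom P3 with equality: the law of iterated upper expectations. -/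
def P3eq (E : ((ℕ → X) → EReal) → List X → EReal) : Prop :=
  ∀ f : (ℕ → X) → EReal, IsFinitaryGamble f → ∀ (n : ℕ) (ω : ℕ → X),
    E f (pref ω n) = E (fun ω' => E f (pref ω' (n + 1))) (pref ω n)

/-- Axiom P4: monotonicity. -/
def P4 (E : ((ℕ → X) → EReal) → List X → EReal) : Prop :=
  ∀ f g : (ℕ → X) → EReal, (∀ ω, f ω ≤ g ω) → ∀ s : List X, E f s ≤ E g s

/-- Axiom P5. -/
def P5 (E : ((ℕ → X) → EReal) → List X → EReal) : Prop :=
  ∀ (s : List X) (f : (ℕ → X) → EReal) (fs : ℕ → (ℕ → X) → EReal),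
    (∀ n, IsFinitaryGamble (fs n)) → UnifBddBelow fs → PtwLim fs f →
    E f s ≤ limsup (fun n => E (fs n) s) atTop

/-- Axiom P6. -/
def P6 (E : ((ℕ → X) → EReal) → List X → EReal) : Prop :=
  ∀ f : (ℕ → X) → EReal, Vblim f → ∀ s : List X,
    ∃ fs : ℕ → (ℕ → X) → EReal,
      (∀ n, IsNGamble n (fs n)) ∧ UnifBddBelow fs ∧ PtwLim fs f ∧
      limsup (fun n => E (fs n) s) atTop ≤ E f s

/-- Axiom P7. -/
def P7 (E : ((ℕ → X) → EReal) → List X → EReal) : Prop :=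
  ∀ (f : (ℕ → X) → EReal) (s : List X),
    E f s = sInf {y : EReal | ∃ g : (ℕ → X) → EReal,
      Vblim g ∧ (∀ ω, f ω ≤ g ω) ∧ y = E g s}

/-- bundled axioms P1–P5. -/
def P15 (Q : List X → (X → ℝ) → ℝ) (E : ((ℕ → X) → EReal) → List X → EReal) : Prop :=
  P1 Q E ∧ P2 E ∧ P3le E ∧ P4 E ∧ P5 E

/-- `Qe` extends `Q` from gambles to extended-real variables. -/
def ExtendsLocal [Fintype X] (Q : (X → ℝ) → ℝ) (Qe : (X → EReal) → EReal) : Prop :=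
  ∀ f : X → ℝ, Qe (fun x => (f x : EReal)) = ((Q f : ℝ) : EReal)

/-- continuity with respect to upper cuts. -/
def UpperCutCont (Qe : (X → EReal) → EReal) : Prop :=
  ∀ f : X → EReal, (∃ c : ℝ, ∀ x, (c : EReal) ≤ f x) →
    Tendsto (fun c : ℝ => Qe (fun x => min (f x) (c : EReal))) atTop (nhds (Qe f))

/-- continuity with respect to lower cuts. -/
def LowerCutCont (Qe : (X → EReal) → EReal) : Prop :=
  ∀ f : X → EReal,
    Tendsto (fun c : ℝ => Qe (fun x => max (f x) (c : EReal))) atBot (nhds (Qe f))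

/-- `Qe` is the extension of the imprecise probability tree `Q` satisfying
continuity with respect to upper and lower cuts. -/
def LocalExtension [Fintype X] (Q : List X → (X → ℝ) → ℝ)
    (Qe : List X → (X → EReal) → EReal) : Prop :=
  ∀ s : List X, ExtendsLocal (Q s) (Qe s) ∧ UpperCutCont (Qe s) ∧ LowerCutCont (Qe s)

/-- supermartingale with respect to the extended local models `Qe`. -/
def IsSupermart (Qe : List X → (X → EReal) → EReal) (M : List X → EReal) : Prop :=
  ∀ s : List X, Qe s (fun x => M (s ++ [x])) ≤ M s

/-- a bounded-below process. -/
def MBddBelow (M : List X → EReal) : Prop := ∃ c : ℝ, ∀ s : List X, (c : EReal) ≤ M s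

/-- the game-theoretic upper expectation (Shafer–Vovk). -/
noncomputable def EV (Qe : List X → (X → EReal) → EReal)
    (f : (ℕ → X) → EReal) (s : List X) : EReal :=
  sInf {y : EReal | ∃ M : List X → EReal, MBddBelow M ∧ IsSupermart Qe M ∧
    (∀ ω ∈ cyl s, f ω ≤ liminf (fun n => M (pref ω n)) atTop) ∧ y = M s}

/-- a canonical path passing through the situation `s`. -/
noncomputable def extPath [Nonempty X] (s : List X) : ℕ → X :=
  fun i => if h : i < s.length then s.get ⟨i, h⟩ else Classical.arbitrary X

/-- extended-real addition with the convention `(+∞) + (−∞) = (−∞) + (+∞) = +∞`. -/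
noncomputable def eadd (a b : EReal) : EReal := if a = ⊤ ∨ b = ⊤ then ⊤ else a + b

/-- extended-real finite sums with the conventions `0·(±∞) = 0` and
`(+∞) + (−∞) = +∞`. -/
noncomputable def esum {α : Type*} (s : Finset α) (f : α → EReal) : EReal :=
  if ∃ x ∈ s, f x = ⊤ then ⊤ else ∑ x ∈ s, f x

/-- the σ-algebra `ℱ` on paths generated by all cylinder events. -/
def cylSA (X : Type*) : MeasurableSpace (ℕ → X) :=
  MeasurableSpace.generateFrom {A : Set (ℕ → X) | ∃ s : List X, A = cyl s}

/-- a precise probability tree: a probability mass function in every situation. -/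
def IsTree [Fintype X] (p : List X → X → ℝ) : Prop :=
  ∀ s : List X, (∀ x, 0 ≤ p s x) ∧ ∑ x, p s x = 1

/-- the `i`-th entry (0-based) of a list, i.e. the `(i+1)`-th state. -/
noncomputable def nthL [Nonempty X] (z : List X) (i : ℕ) : X :=
  z.getD i (Classical.arbitrary X)

/-- `P` is the family of conditional probability measures on `ℱ` determined by
the precise probability tree `p` via the product formula on cylinder events. -/
def CylProp [Fintype X] [Nonempty X] (p : List X → X → ℝ)
    (P : List X → @Measure (ℕ → X) (cylSA X)) : Prop :=
  ∀ s z : List X,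
    P s (cyl z) =
      if s.length < z.length ∧ z.take s.length = s then
        ∏ i ∈ Finset.Ico s.length z.length, ENNReal.ofReal (p (z.take i) (nthL z i))
      else if z.length ≤ s.length ∧ s.take z.length = z then 1 else 0

/-- the nonnegative part of an extended real, as an `ℝ≥0∞`. -/
noncomputable def toENN (a : EReal) : ℝ≥0∞ := if a = ⊤ then ⊤ else ENNReal.ofReal a.toReal

/-- `∫ f⁺ dP`. -/
noncomputable def lpos (P : @Measure (ℕ → X) (cylSA X)) (f : (ℕ → X) → EReal) : ℝ≥0∞ :=
  @MeasureTheory.lintegral _ (cylSA X) P (fun ω => toENN (f ω))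

/-- `∫ f⁻ dP`. -/
noncomputable def lneg (P : @Measure (ℕ → X) (cylSA X)) (f : (ℕ → X) → EReal) : ℝ≥0∞ :=
  @MeasureTheory.lintegral _ (cylSA X) P (fun ω => toENN (-(f ω)))

/-- the Lebesgue integral `∫ f dP = ∫ f⁺ dP − ∫ f⁻ dP`. -/
noncomputable def emeas (P : @Measure (ℕ → X) (cylSA X)) (f : (ℕ → X) → EReal) : EReal :=
  (lpos P f : EReal) - (lneg P f : EReal)

/-- `ℱ`-measurability of a global variable. -/
def FMeasurable (f : (ℕ → X) → EReal) : Prop := @Measurable _ _ (cylSA X) _ f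

/-- the Lebesgue integral `∫ f dP` exists. -/
def EMeasExists (P : @Measure (ℕ → X) (cylSA X)) (f : (ℕ → X) → EReal) : Prop :=
  FMeasurable f ∧ min (lpos P f) (lneg P f) < ⊤

/-- the upper integral `Ē¹`. -/
noncomputable def upInt1 (P : @Measure (ℕ → X) (cylSA X)) (f : (ℕ → X) → EReal) : EReal :=
  sInf {y : EReal | ∃ g : (ℕ → X) → EReal,
    FMeasurable g ∧ IsBddBelow g ∧ (∀ ω, f ω ≤ g ω) ∧ y = emeas P g}

/-- the upper integral `Ē²`. -/
noncomputable def upInt2 (P : @Measure (ℕ → X) (cylSA X)) (f : (ℕ → X) → EReal) : EReal :=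
  sInf {y : EReal | ∃ g : (ℕ → X) → EReal,
    EMeasExists P g ∧ (∀ ω, f ω ≤ g ω) ∧ y = emeas P g}

/-- the game-theoretic upper expectation with respect to a precise probability tree. -/
noncomputable def EVp [Fintype X] (p : List X → X → ℝ)
    (f : (ℕ → X) → EReal) (s : List X) : EReal :=
  sInf {y : EReal | ∃ M : List X → EReal, MBddBelow M ∧
    (∀ t : List X, ∑ x, ((p t x : ℝ) : EReal) * M (t ++ [x]) ≤ M t) ∧
    (∀ ω ∈ cyl s, f ω ≤ liminf (fun n => M (pref ω n)) atTop) ∧ y = M s}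

/-- the credal set of a coherent upper expectation. -/
def credal [Fintype X] (Q : (X → ℝ) → ℝ) : Set (X → ℝ) :=
  {q | (∀ x, 0 ≤ q x) ∧ (∑ x, q x = 1) ∧ ∀ f : X → ℝ, ∑ x, f x * q x ≤ Q f}

/-- a precise probability tree compatible with the imprecise probability tree `Q`. -/
def Compat [Fintype X] (Q : List X → (X → ℝ) → ℝ) (p : List X → X → ℝ) : Prop :=
  ∀ s : List X, p s ∈ credal (Q s)

/-- the global measure-theoretic upper expectation. -/
noncomputable def Emeas [Fintype X] (Q : List X → (X → ℝ) → ℝ)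
    (P : (List X → X → ℝ) → List X → @Measure (ℕ → X) (cylSA X))
    (f : (ℕ → X) → EReal) (s : List X) : EReal :=
  sSup {y : EReal | ∃ p : List X → X → ℝ, Compat Q p ∧ y = upInt1 (P p s) f}


/-! ### Auxiliary lemmas -/

section Aux

variable {X : Type*}

attribute [local instance] cylSA

lemma pref_eq (ω : ℕ → X) (n : ℕ) : pref ω n = List.ofFn (fun i : Fin n => ω i) := rfl

lemma pref_length (ω : ℕ → X) (n : ℕ) : (pref ω n).length = n := by
  simp [pref]

lemma pref_succ (ω : ℕ → X) (n : ℕ) : pref ω (n + 1) = pref ω n ++ [ω n] := by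
  rw [pref_eq, pref_eq, List.ofFn_succ', List.concat_eq_append]
  simp

lemma mem_cyl_ofFn {n : ℕ} (v : Fin n → X) (ω : ℕ → X) :
    ω ∈ cyl (List.ofFn v) ↔ (fun i : Fin n => ω i) = v := by
  simp only [cyl, Set.mem_setOf_eq, List.length_ofFn, pref_eq, List.ofFn_inj]

lemma cyl_nil : cyl ([] : List X) = Set.univ := by
  ext ω; simp [cyl, pref]

lemma measurableSet_cyl (z : List X) : MeasurableSet (cyl z) :=
  MeasurableSpace.measurableSet_generateFrom ⟨z, rfl⟩

lemma measurable_restr [Fintype X] (n : ℕ) :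
    @Measurable (ℕ → X) (Fin n → X) _ ⊤ (fun ω i => ω i) := by
  letI : MeasurableSpace (Fin n → X) := ⊤
  refine measurable_to_countable (fun ω => ?_)
  have : (fun (ω' : ℕ → X) (i : Fin n) => ω' i) ⁻¹' {fun i : Fin n => ω i}
      = cyl (List.ofFn (fun i : Fin n => ω i)) := by
    ext ω'; simp [mem_cyl_ofFn]
  rw [this]
  exact measurableSet_cyl _

lemma measurable_cylfun [Fintype X] {β : Type*} [MeasurableSpace β] {n : ℕ}
    (F : (Fin n → X) → β) : Measurable (fun ω : ℕ → X => F (fun i : Fin n => ω i)) :=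
  (measurable_from_top (f := F)).comp (measurable_restr n)

lemma lintegral_cylfun [Fintype X] (μ : Measure (ℕ → X)) {n : ℕ}
    (F : (Fin n → X) → ℝ≥0∞) :
    ∫⁻ ω, F (fun i : Fin n => ω i) ∂μ
      = ∑ v : Fin n → X, μ (cyl (List.ofFn v)) * F v := by
  have hrep : (fun ω : ℕ → X => F (fun i : Fin n => ω i))
      = fun ω => ∑ v : Fin n → X, (cyl (List.ofFn v)).indicator (fun _ => F v) ω := by
    funext ω
    rw [Finset.sum_eq_single (fun i : Fin n => ω i)]
    · simp [Set.indicator_of_mem, (mem_cyl_ofFn _ ω).2 rfl]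
    · intro v _ hv
      refine Set.indicator_of_notMem ?_ _
      rw [mem_cyl_ofFn]
      exact fun h => hv h.symm
    · intro h; exact absurd (Finset.mem_univ _) h
  rw [hrep, lintegral_finset_sum]
  · refine Finset.sum_congr rfl (fun v _ => ?_)
    rw [lintegral_indicator (measurableSet_cyl _), setLIntegral_const, mul_comm]
  · exact fun v _ => (measurable_const (a := F v)).indicator (measurableSet_cyl _)

end Aux

section ToENN

lemma toENN_coe (r : ℝ) : toENN (r : EReal) = ENNReal.ofReal r := by
  simp [toENN]

lemma toENN_top : toENN (⊤ : EReal) = ⊤ := by simp [toENN]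

lemma toENN_bot : toENN (⊥ : EReal) = 0 := by simp [toENN]

lemma toENN_mono : Monotone toENN := by
  intro a b hab
  induction a using EReal.rec with
  | bot => simp [toENN_bot]
  | top => rw [top_le_iff.1 hab]
  | coe r =>
    induction b using EReal.rec with
    | bot => exact absurd hab (by simp)
    | top => simp [toENN_top]
    | coe q =>
      rw [toENN_coe, toENN_coe]
      exact ENNReal.ofReal_le_ofReal (EReal.coe_le_coe_iff.1 hab)

lemma sub_const_mono {a b : EReal} (h : a ≤ b) (c : ℝ) : a - (c : EReal) ≤ b - c :=
  EReal.sub_le_sub h le_rfl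

lemma continuous_toENN_sub (c : ℝ) : Continuous (fun a : EReal => toENN (a - (c : EReal))) := by
  apply Monotone.continuous_of_surjective
  · exact fun a b hab => toENN_mono (sub_const_mono hab c)
  · intro y
    induction y using ENNReal.recTopCoe with
    | top =>
      refine ⟨⊤, ?_⟩
      show toENN ((⊤:EReal) - (c:EReal)) = ⊤
      rw [EReal.top_sub_coe, toENN_top]
    | coe r =>
      refine ⟨((r : ℝ) + c : ℝ), ?_⟩
      show toENN ((((r : ℝ) + c : ℝ) : EReal) - (c : EReal)) = (r : ℝ≥0∞)
      rw [show (((r : ℝ) + c : ℝ) : EReal) - (c : EReal) = (((r : ℝ) : ℝ) : EReal) by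
        rw [← EReal.coe_sub]; norm_num]
      rw [toENN_coe, ENNReal.ofReal_coe_nnreal]

lemma measurable_toENN : Measurable toENN := by
  have h := (continuous_toENN_sub 0).measurable
  have : (fun a : EReal => toENN (a - (0:ℝ))) = toENN := by
    funext a; norm_num
  rwa [this] at h

lemma toENN_sub_top (c : ℝ) : toENN ((⊤:EReal) - (c:EReal)) = ⊤ := by
  rw [EReal.top_sub_coe, toENN_top]

end ToENN

section LocalStep

variable {X : Type*}

lemma coherent_mono [Fintype X] [Nonempty X] {Q : (X → ℝ) → ℝ} (hQ : IsCoherent Q)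
    {f g : X → ℝ} (hfg : ∀ x, f x ≤ g x) : Q f ≤ Q g := by
  have h1 : Q (fun x => g x + (f x - g x)) ≤ Q g + Q (fun x => f x - g x) := hQ.2.1 g _
  have h2 : Q (fun x => f x - g x) ≤ ⨆ x, (f x - g x) := hQ.1 _
  have h3 : (⨆ x, (f x - g x)) ≤ 0 := ciSup_le (fun x => sub_nonpos.2 (hfg x))
  have h4 : (fun x => g x + (f x - g x)) = f := by funext x; ring
  rw [h4] at h1
  linarith

lemma local_step [Fintype X] [Nonempty X] {Q : (X → ℝ) → ℝ} (hQ : IsCoherent Q)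
    {Qe : (X → EReal) → EReal} (hext : ExtendsLocal Q Qe) (hup : UpperCutCont Qe)
    {q : X → ℝ} (hq : q ∈ credal Q) {c : ℝ} (hc : c ≤ 0)
    (h : X → EReal) (hh : ∀ x, (c : EReal) ≤ h x) :
    ∑ x, ENNReal.ofReal (q x) * toENN (h x - (c : EReal)) ≤ toENN (Qe h - (c : EReal)) := by
  set trunc : ℝ → X → ℝ := fun t x => (min (h x) (t : EReal)).toReal with htrunc
  have hminne : ∀ (t : ℝ) (x : X), min (h x) (t : EReal) ≠ ⊥ ∧ min (h x) (t : EReal) ≠ ⊤ := by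
    intro t x
    constructor
    · have h1 : ((min c t : ℝ) : EReal) ≤ min (h x) (t : EReal) :=
        le_min (le_trans (EReal.coe_le_coe_iff.2 (min_le_left c t)) (hh x))
          (EReal.coe_le_coe_iff.2 (min_le_right c t))
      exact ne_of_gt (lt_of_lt_of_le (EReal.bot_lt_coe (min c t)) h1)
    · exact ne_top_of_le_ne_top (EReal.coe_ne_top t) (min_le_right _ _)
  have fact1 : ∀ (t : ℝ) (x : X), ((trunc t x : ℝ) : EReal) = min (h x) (t : EReal) := by
    intro t x
    exact EReal.coe_toReal (hminne t x).2 (hminne t x).1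
  have key1 : ∀ t : ℝ, Qe (fun x => min (h x) (t : EReal)) = ((Q (trunc t) : ℝ) : EReal) := by
    intro t
    rw [← hext (trunc t)]
    congr 1
    funext x
    exact (fact1 t x).symm
  have hmono : Monotone (fun t : ℝ => ((Q (trunc t) : ℝ) : EReal)) := by
    intro t1 t2 ht
    rw [EReal.coe_le_coe_iff]
    refine coherent_mono hQ (fun x => ?_)
    refine EReal.toReal_le_toReal ?_ (hminne t1 x).1 (hminne t2 x).2
    exact min_le_min le_rfl (EReal.coe_le_coe_iff.2 ht)
  have hlim : Tendsto (fun t : ℝ => ((Q (trunc t) : ℝ) : EReal)) atTop (nhds (Qe h)) := by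
    have := hup h ⟨c, hh⟩
    refine this.congr (fun t => ?_)
    exact key1 t
  have key2 : ∀ t : ℝ, ((Q (trunc t) : ℝ) : EReal) ≤ Qe h :=
    fun t => Monotone.ge_of_tendsto hmono hlim t
  have htruncge : ∀ (t : ℝ), c ≤ t → ∀ x, c ≤ trunc t x := by
    intro t ht x
    have : ((c : ℝ) : EReal) ≤ min (h x) (t : EReal) :=
      le_min (hh x) (EReal.coe_le_coe_iff.2 ht)
    have := EReal.toReal_le_toReal this (EReal.coe_ne_bot c) (hminne t x).2
    simpa using this
  have sumle : ∀ t : ℝ, c ≤ t →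
      ∑ x, ENNReal.ofReal (q x) * toENN (min (h x) (t : EReal) - (c : EReal))
        ≤ toENN (Qe h - (c : EReal)) := by
    intro t ht
    have hterm : ∀ x, ENNReal.ofReal (q x) * toENN (min (h x) (t : EReal) - (c : EReal))
        = ENNReal.ofReal (q x * (trunc t x - c)) := by
      intro x
      rw [← fact1 t x, ← EReal.coe_sub, toENN_coe, ENNReal.ofReal_mul (hq.1 x)]
    calc ∑ x, ENNReal.ofReal (q x) * toENN (min (h x) (t : EReal) - (c : EReal))
        = ∑ x, ENNReal.ofReal (q x * (trunc t x - c)) := by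
          exact Finset.sum_congr rfl (fun x _ => hterm x)
      _ = ENNReal.ofReal (∑ x, q x * (trunc t x - c)) := by
          rw [ENNReal.ofReal_sum_of_nonneg]
          intro x _
          exact mul_nonneg (hq.1 x) (sub_nonneg.2 (htruncge t ht x))
      _ ≤ ENNReal.ofReal (Q (trunc t) - c) := by
          refine ENNReal.ofReal_le_ofReal ?_
          have hsum : ∑ x, q x * (trunc t x - c) = (∑ x, trunc t x * q x) - c := by
            have : ∀ x, q x * (trunc t x - c) = trunc t x * q x - c * q x := by
              intro x; ring
            rw [Finset.sum_congr rfl (fun x _ => this x), Finset.sum_sub_distrib,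
              ← Finset.mul_sum, hq.2.1, mul_one]
          rw [hsum]
          have := hq.2.2 (trunc t)
          linarith
      _ ≤ toENN (Qe h - (c : EReal)) := by
          have h1 : ((Q (trunc t) - c : ℝ) : EReal) ≤ Qe h - (c : EReal) := by
            rw [EReal.coe_sub]
            exact sub_const_mono (key2 t) c
          have := toENN_mono h1
          rwa [toENN_coe] at this
  -- take the limit t = c + k, k → ∞
  have hptw : ∀ x : X, Tendsto
      (fun k : ℕ => toENN (min (h x) ((c + (k:ℝ) : ℝ) : EReal) - (c : EReal)))
      atTop (nhds (toENN (h x - (c : EReal)))) := by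
    intro x
    by_cases hx : h x = ⊤
    · rw [hx]
      have h1 : ∀ k : ℕ, toENN (min (⊤ : EReal) ((c + (k:ℝ) : ℝ) : EReal) - (c : EReal))
          = ENNReal.ofReal (k : ℝ) := by
        intro k
        rw [min_eq_right le_top, ← EReal.coe_sub, toENN_coe]
        norm_num
      rw [toENN_sub_top]
      refine Tendsto.congr (fun k => (h1 k).symm) ?_
      exact ENNReal.tendsto_ofReal_atTop.comp tendsto_natCast_atTop_atTop
    · have hxb : h x ≠ ⊥ := ne_of_gt (lt_of_lt_of_le (EReal.bot_lt_coe c) (hh x))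
      have hxr : h x = (((h x).toReal : ℝ) : EReal) := (EReal.coe_toReal hx hxb).symm
      refine Tendsto.congr' ?_ tendsto_const_nhds
      rw [Filter.EventuallyEq, eventually_atTop]
      refine ⟨⌈(h x).toReal - c⌉₊, fun k hk => ?_⟩
      have : (h x).toReal ≤ c + (k : ℝ) := by
        have := Nat.le_of_ceil_le hk
        linarith
      have hmin : min (h x) ((c + (k:ℝ) : ℝ) : EReal) = h x := by
        refine min_eq_left ?_
        rw [hxr]
        exact EReal.coe_le_coe_iff.2 this
      rw [hmin]
  have hsumtend : Tendsto
      (fun k : ℕ => ∑ x, ENNReal.ofReal (q x) *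
        toENN (min (h x) ((c + (k:ℝ) : ℝ) : EReal) - (c : EReal)))
      atTop (nhds (∑ x, ENNReal.ofReal (q x) * toENN (h x - (c : EReal)))) := by
    refine tendsto_finset_sum _ (fun x _ => ?_)
    exact ENNReal.Tendsto.const_mul (hptw x) (Or.inr ENNReal.ofReal_ne_top)
  refine le_of_tendsto' hsumtend (fun k => ?_)
  exact sumle (c + k) (by simp)
end LocalStep

section CylPropLemmas

variable {X : Type*}

attribute [local instance] cylSA

lemma nthL_append [Nonempty X] (z : List X) (x : X) {i : ℕ} (hi : i < z.length) :
    nthL (z ++ [x]) i = nthL z i := by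
  unfold nthL
  exact List.getD_append _ _ _ _ hi

lemma nthL_append_self [Nonempty X] (z : List X) (x : X) :
    nthL (z ++ [x]) z.length = x := by
  unfold nthL
  rw [List.getD_append_right _ _ _ _ le_rfl]
  simp

lemma cylProp_self [Fintype X] [Nonempty X] {p : List X → X → ℝ}
    {Pm : List X → Measure (ℕ → X)} (h : CylProp p Pm) (s : List X) :
    Pm s (cyl s) = 1 := by
  rw [h s s, if_neg (by simp), if_pos ⟨le_rfl, List.take_length⟩]

lemma cylProp_ne [Fintype X] [Nonempty X] {p : List X → X → ℝ}
    {Pm : List X → Measure (ℕ → X)} (h : CylProp p Pm) {s z : List X}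
    (hlen : z.length = s.length) (hne : z ≠ s) : Pm s (cyl z) = 0 := by
  rw [h s z, if_neg (by omega), if_neg]
  rintro ⟨-, h2⟩
  rw [hlen, List.take_length] at h2
  exact hne h2.symm

lemma cylProp_univ [Fintype X] [Nonempty X] {p : List X → X → ℝ}
    {Pm : List X → Measure (ℕ → X)} (h : CylProp p Pm) (s : List X) :
    Pm s Set.univ = 1 := by
  rw [← cyl_nil, h s [], if_neg (by simp), if_pos ⟨by simp, by simp⟩]

lemma cylProp_snoc [Fintype X] [Nonempty X] {p : List X → X → ℝ}
    {Pm : List X → Measure (ℕ → X)} (h : CylProp p Pm) {s z : List X} (x : X)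
    (hlen : s.length ≤ z.length) :
    Pm s (cyl (z ++ [x])) = Pm s (cyl z) * ENNReal.ofReal (p z x) := by
  have hlen' : (z ++ [x]).length = z.length + 1 := by simp
  have htake : (z ++ [x]).take s.length = z.take s.length :=
    List.take_append_of_le_length hlen
  have htop : ENNReal.ofReal (p ((z ++ [x]).take z.length) (nthL (z ++ [x]) z.length))
      = ENNReal.ofReal (p z x) := by
    rw [List.take_left, nthL_append_self]
  by_cases hts : z.take s.length = s
  · rw [h s (z ++ [x]), if_pos ⟨by omega, by rw [htake]; exact hts⟩]
    have hprod : ∏ i ∈ Finset.Ico s.length (z ++ [x]).length,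
        ENNReal.ofReal (p ((z ++ [x]).take i) (nthL (z ++ [x]) i))
        = (∏ i ∈ Finset.Ico s.length z.length,
            ENNReal.ofReal (p (z.take i) (nthL z i))) * ENNReal.ofReal (p z x) := by
      rw [hlen', Finset.prod_Ico_succ_top hlen, htop]
      congr 1
      refine Finset.prod_congr rfl (fun i hi => ?_)
      rw [Finset.mem_Ico] at hi
      rw [List.take_append_of_le_length (le_of_lt hi.2), nthL_append z x hi.2]
    rw [hprod]
    congr 1
    rcases lt_or_eq_of_le hlen with hlt | heq
    · rw [h s z, if_pos ⟨hlt, hts⟩]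
    · have hzs : z = s := by rw [heq, List.take_length] at hts; exact hts
      rw [hzs, cylProp_self h s, Finset.Ico_self, Finset.prod_empty]
  · rw [h s (z ++ [x]), if_neg (by rw [htake]; tauto),
      if_neg (by rintro ⟨h1, -⟩; omega),
      h s z, if_neg (by tauto), if_neg, zero_mul]
    rintro ⟨h1, h2⟩
    have heq : z.length = s.length := le_antisymm h1 hlen
    rw [heq, List.take_length] at h2
    subst h2
    exact hts List.take_length

end CylPropLemmas

section MartBound

variable {X : Type*}

attribute [local instance] cylSA

lemma ofFn_snoc {n : ℕ} (w : Fin n → X) (x : X) :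
    List.ofFn (Fin.snoc w x : Fin (n+1) → X) = List.ofFn w ++ [x] := by
  rw [List.ofFn_succ' (Fin.snoc w x), List.concat_eq_append, Fin.snoc_last]
  exact congrArg (· ++ [x]) (congrArg List.ofFn (funext fun i => @Fin.snoc_castSucc n (fun _ => X) x w i))

lemma mart_bound [Fintype X] [Nonempty X]
    {Q : List X → (X → ℝ) → ℝ} (hQ : ∀ s, IsCoherent (Q s))
    {Qe : List X → (X → EReal) → EReal} (hQe : LocalExtension Q Qe)
    {p : List X → X → ℝ} (hp : Compat Q p)
    {Pm : List X → Measure (ℕ → X)} (hPm : CylProp p Pm)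
    {M : List X → EReal} (hsm : IsSupermart Qe M)
    {c : ℝ} (hc : c ≤ 0) (hM : ∀ t, (c : EReal) ≤ M t)
    (s : List X) :
    ∀ n, s.length ≤ n →
      ∫⁻ ω, toENN (M (pref ω n) - (c : EReal)) ∂(Pm s) ≤ toENN (M s - (c : EReal)) := by
  have hrw : ∀ m : ℕ, ∫⁻ ω, toENN (M (pref ω m) - (c:EReal)) ∂(Pm s)
      = ∑ v : Fin m → X, Pm s (cyl (List.ofFn v)) * toENN (M (List.ofFn v) - (c:EReal)) := by
    intro m
    exact lintegral_cylfun (Pm s) (fun v : Fin m → X => toENN (M (List.ofFn v) - (c:EReal)))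
  refine Nat.le_induction ?_ ?_
  · -- base case n = s.length
    rw [hrw]
    rw [Finset.sum_eq_single (fun i : Fin s.length => s.get i)]
    · rw [List.ofFn_get, cylProp_self hPm, one_mul]
    · intro v _ hv
      have hne : List.ofFn v ≠ s := by
        intro hcon
        apply hv
        have : List.ofFn v = List.ofFn (fun i : Fin s.length => s.get i) := by
          rw [List.ofFn_get, hcon]
        exact List.ofFn_inj.1 this
      rw [cylProp_ne hPm (by simp) hne, zero_mul]
    · intro hcon; exact absurd (Finset.mem_univ _) hcon
  · -- inductive step
    intro n hn IH
    rw [hrw] at IH ⊢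
    have hstep : ∑ v : Fin (n+1) → X, Pm s (cyl (List.ofFn v)) * toENN (M (List.ofFn v) - (c:EReal))
        = ∑ w : Fin n → X, ∑ x : X,
            Pm s (cyl (List.ofFn w)) *
              (ENNReal.ofReal (p (List.ofFn w) x) * toENN (M (List.ofFn w ++ [x]) - (c:EReal))) := by
      rw [← Fintype.sum_equiv (Fin.snocEquiv (fun _ => X))
        (fun q : X × (Fin n → X) =>
          Pm s (cyl (List.ofFn (Fin.snoc q.2 q.1 : Fin (n+1) → X))) *
            toENN (M (List.ofFn (Fin.snoc q.2 q.1 : Fin (n+1) → X)) - (c:EReal)))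
        (fun v : Fin (n+1) → X => Pm s (cyl (List.ofFn v)) * toENN (M (List.ofFn v) - (c:EReal)))
        (fun q => rfl)]
      rw [Fintype.sum_prod_type]
      rw [Finset.sum_comm]
      refine Finset.sum_congr rfl (fun w _ => Finset.sum_congr rfl (fun x _ => ?_))
      rw [ofFn_snoc, cylProp_snoc hPm x (by simp [hn]), mul_assoc]
    rw [hstep]
    refine le_trans (Finset.sum_le_sum (fun w _ => ?_)) IH
    · rw [← Finset.mul_sum]
      refine mul_le_mul_right ?_ _
      set t := List.ofFn w with ht
      have hls := local_step (hQ t) (hQe t).1 (hQe t).2.1 (hp t) hc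
        (fun x => M (t ++ [x])) (fun x => hM _)
      refine le_trans hls (toENN_mono (sub_const_mono (hsm t) c))

end MartBound

section FinalHelpers

lemma toENN_ptw {c : ℝ} (hc : c ≤ 0) {a : EReal} (ha : (c : EReal) ≤ a) :
    toENN a + ENNReal.ofReal (-c) ≤ toENN (a - (c : EReal)) + toENN (-a) := by
  induction a using EReal.rec with
  | bot => exact absurd ha (EReal.bot_lt_coe c).not_ge
  | top =>
    rw [toENN_top, toENN_sub_top, top_add]
    exact le_top
  | coe r =>
    have hcr : c ≤ r := EReal.coe_le_coe_iff.1 ha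
    rw [toENN_coe, ← EReal.coe_sub, toENN_coe, ← EReal.coe_neg, toENN_coe]
    by_cases hr : 0 ≤ r
    · rw [← ENNReal.ofReal_add hr (neg_nonneg.2 hc), show r + -c = r - c by ring]
      exact le_self_add
    · push_neg at hr
      rw [ENNReal.ofReal_eq_zero.2 (le_of_lt hr), zero_add,
        ← ENNReal.ofReal_add (by linarith) (by linarith)]
      exact ENNReal.ofReal_le_ofReal (by linarith)

lemma enn_coe_ereal {x : ℝ≥0∞} (hx : x ≠ ⊤) : (x : EReal) = ((x.toReal : ℝ) : EReal) := by
  rw [← EReal.toReal_coe_ennreal (x := x)]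
  refine (EReal.coe_toReal ?_ ?_).symm
  · exact fun h => hx (EReal.coe_ennreal_eq_top_iff.1 h)
  · exact ne_of_gt (lt_of_lt_of_le EReal.bot_lt_zero (EReal.coe_ennreal_nonneg x))

end FinalHelpers

section MainProof

attribute [local instance] cylSA

theorem stmt18 {X : Type*} [Fintype X] [Nonempty X]
    (Q : List X → (X → ℝ) → ℝ) (hQ : ∀ s, IsCoherent (Q s))
    (Qe : List X → (X → EReal) → EReal) (hQe : LocalExtension Q Qe)
    (P : (List X → X → ℝ) → List X → @Measure (ℕ → X) (cylSA X))
    (hP : ∀ p : List X → X → ℝ, Compat Q p → CylProp p (P p))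
    (f : (ℕ → X) → EReal) (s : List X) :
    Emeas Q P f s ≤ EV Qe f s := by
  classical
  refine sSup_le ?_
  rintro y ⟨p, hp, rfl⟩
  refine le_sInf ?_
  rintro y' ⟨M, ⟨c0, hc0⟩, hsm, hdom, rfl⟩
  set c : ℝ := min c0 0 with hcdef
  have hc : c ≤ 0 := min_le_right _ _
  have hM : ∀ t, (c : EReal) ≤ M t := fun t =>
    le_trans (EReal.coe_le_coe_iff.2 (min_le_left c0 0)) (hc0 t)
  have hPm := hP p hp
  set μ := P p s with hμdef
  set g : (ℕ → X) → EReal :=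
    fun ω => if ω ∈ cyl s then liminf (fun n => M (pref ω n)) atTop else ⊤ with hgdef
  have hMn : ∀ n, Measurable (fun ω : ℕ → X => M (pref ω n)) := fun n =>
    measurable_cylfun (fun v : Fin n → X => M (List.ofFn v))
  have hgmeas : FMeasurable g := by
    refine Measurable.ite (measurableSet_cyl s) ?_ measurable_const
    exact Measurable.liminf hMn
  have hgc : ∀ ω, (c : EReal) ≤ g ω := by
    intro ω
    simp only [hgdef]
    by_cases hω : ω ∈ cyl s
    · rw [if_pos hω]
      exact le_liminf_of_le (by isBoundedDefault) (Eventually.of_forall (fun n => hM _))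
    · rw [if_neg hω]; exact le_top
  have hgdom : ∀ ω, f ω ≤ g ω := by
    intro ω
    simp only [hgdef]
    by_cases hω : ω ∈ cyl s
    · rw [if_pos hω]; exact hdom ω hω
    · rw [if_neg hω]; exact le_top
  refine le_trans (sInf_le ⟨g, hgmeas, ⟨c, hgc⟩, hgdom, rfl⟩) ?_
  by_cases htop : M s = ⊤
  · rw [htop]; exact le_top
  have hMsb : M s ≠ ⊥ := ne_of_gt (lt_of_lt_of_le (EReal.bot_lt_coe c) (hM s))
  have hcyl1 : μ (cyl s) = 1 := cylProp_self hPm s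
  have huniv : μ Set.univ = 1 := cylProp_univ hPm s
  have hae : ∀ᵐ ω ∂μ, ω ∈ cyl s := by
    rw [ae_iff]
    have hset : {ω : ℕ → X | ¬ ω ∈ cyl s} = (cyl s)ᶜ := rfl
    rw [hset, measure_compl (measurableSet_cyl s) (by rw [hcyl1]; exact ENNReal.one_ne_top),
      huniv, hcyl1, tsub_self]
  have hmeasn : ∀ n, Measurable (fun ω : ℕ → X => toENN (M (pref ω n) - (c : EReal))) :=
    fun n => measurable_cylfun (fun v : Fin n → X => toENN (M (List.ofFn v) - (c : EReal)))
  have hI : ∫⁻ ω, toENN (g ω - (c : EReal)) ∂μ ≤ toENN (M s - (c : EReal)) := by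
    have h1 : ∫⁻ ω, toENN (g ω - (c : EReal)) ∂μ
        = ∫⁻ ω, liminf (fun n => toENN (M (pref ω n) - (c : EReal))) atTop ∂μ := by
      refine lintegral_congr_ae ?_
      filter_upwards [hae] with ω hω
      simp only [hgdef]
      simp only [if_pos hω]
      have hmono : Monotone (fun a : EReal => toENN (a - (c : EReal))) :=
        fun a b hab => toENN_mono (sub_const_mono hab c)
      have hmap := Monotone.map_liminf_of_continuousAt (F := atTop) hmono
        (fun n => M (pref ω n)) ((continuous_toENN_sub c).continuousAt)
      simpa [Function.comp_def] using hmap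
    rw [h1]
    refine le_trans (lintegral_liminf_le hmeasn) ?_
    refine liminf_le_of_frequently_le (Eventually.frequently ?_)
    rw [eventually_atTop]
    exact ⟨s.length, fun n hn => mart_bound hQ hQe hp hPm hsm hc hM s n hn⟩
  have hBle : lneg μ g ≤ ENNReal.ofReal (-c) := by
    have hptb : ∀ ω, toENN (-(g ω)) ≤ ENNReal.ofReal (-c) := by
      intro ω
      have : -(g ω) ≤ (((-c : ℝ)) : EReal) := by
        rw [EReal.coe_neg]
        exact EReal.neg_le_neg_iff.2 (hgc ω)
      have h2 := toENN_mono this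
      rwa [toENN_coe] at h2
    calc lneg μ g ≤ ∫⁻ _, ENNReal.ofReal (-c) ∂μ := lintegral_mono hptb
      _ = ENNReal.ofReal (-c) := by rw [lintegral_const, huniv, mul_one]
  have hmeasg1 : Measurable (fun ω : ℕ → X => toENN (g ω - (c : EReal))) :=
    ((continuous_toENN_sub c).measurable).comp hgmeas
  have hmeasg2 : Measurable (fun ω : ℕ → X => toENN (-(g ω))) :=
    measurable_toENN.comp hgmeas.neg
  have hint : lpos μ g + ENNReal.ofReal (-c)
      ≤ (∫⁻ ω, toENN (g ω - (c : EReal)) ∂μ) + lneg μ g := by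
    calc lpos μ g + ENNReal.ofReal (-c)
        = ∫⁻ ω, (toENN (g ω) + ENNReal.ofReal (-c)) ∂μ := by
          rw [lintegral_add_right _ measurable_const, lintegral_const, huniv, mul_one]
          rfl
      _ ≤ ∫⁻ ω, (toENN (g ω - (c : EReal)) + toENN (-(g ω))) ∂μ :=
          lintegral_mono (fun ω => toENN_ptw hc (hgc ω))
      _ = (∫⁻ ω, toENN (g ω - (c : EReal)) ∂μ) + lneg μ g := by
          rw [lintegral_add_left hmeasg1]
          rfl
  -- finiteness
  set m : ℝ := (M s).toReal with hmdef
  have hMs : M s = ((m : ℝ) : EReal) := (EReal.coe_toReal htop hMsb).symm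
  have hcm : c ≤ m := by
    have := hM s
    rw [hMs] at this
    exact EReal.coe_le_coe_iff.1 this
  have hK : toENN (M s - (c : EReal)) = ENNReal.ofReal (m - c) := by
    rw [hMs, ← EReal.coe_sub, toENN_coe]
  have hIfin : (∫⁻ ω, toENN (g ω - (c : EReal)) ∂μ) ≠ ⊤ := by
    refine ne_top_of_le_ne_top ?_ hI
    rw [hK]; exact ENNReal.ofReal_ne_top
  have hBfin : lneg μ g ≠ ⊤ := ne_top_of_le_ne_top ENNReal.ofReal_ne_top hBle
  have hAfin : lpos μ g ≠ ⊤ := by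
    have hle : lpos μ g ≤ (∫⁻ ω, toENN (g ω - (c : EReal)) ∂μ) + lneg μ g :=
      le_trans le_self_add hint
    exact ne_top_of_le_ne_top (ENNReal.add_ne_top.2 ⟨hIfin, hBfin⟩) hle
  -- real arithmetic
  have hreal : (lpos μ g).toReal - (lneg μ g).toReal ≤ m := by
    have h2 : (lpos μ g).toReal + (-c)
        ≤ (∫⁻ ω, toENN (g ω - (c : EReal)) ∂μ).toReal + (lneg μ g).toReal := by
      have := ENNReal.toReal_le_toReal
        (ENNReal.add_ne_top.2 ⟨hAfin, ENNReal.ofReal_ne_top⟩)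
        (ENNReal.add_ne_top.2 ⟨hIfin, hBfin⟩) |>.2 hint
      rwa [ENNReal.toReal_add hAfin ENNReal.ofReal_ne_top,
        ENNReal.toReal_add hIfin hBfin, ENNReal.toReal_ofReal (by linarith)] at this
    have h3 : (∫⁻ ω, toENN (g ω - (c : EReal)) ∂μ).toReal ≤ m - c := by
      have h4 : (∫⁻ ω, toENN (g ω - (c : EReal)) ∂μ) ≤ ENNReal.ofReal (m - c) := by
        rw [← hK]; exact hI
      have h5 := (ENNReal.toReal_le_toReal hIfin ENNReal.ofReal_ne_top).2 h4
      rwa [ENNReal.toReal_ofReal (by linarith)] at h5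
    linarith
  show emeas μ g ≤ M s
  rw [emeas, enn_coe_ereal hAfin, enn_coe_ereal hBfin, ← EReal.coe_sub, hMs]
  exact EReal.coe_le_coe_iff.2 hreal

end MainProof

end UEP
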